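/- arXiv:1502.00351 — 6 statements merged into one kernel-verified Lean document; each statement's English description precedes it below -/
import Mathlib

section
/- Let T₁,…,T_m : [0,1] → [0,1] be contraction maps whose images cover [0,1], i.e. [0,1] = ⋃ᵢ Tᵢ([0,1]), let S₁,…,S_m : ℝⁿ → ℝⁿ be contraction maps, and let f : [0,1] → ℝⁿ be a continuous map satisfying f(Tᵢ(t)) = Sᵢ(f(t)) for every i ∈ {1,…,m} and every t ∈ [0,1]. Define Wᵢ : ℝ × ℝⁿ → ℝ × ℝⁿ by Wᵢ(t,x) = (Tᵢ(t), Sᵢ(x)). Then the graph Γ = {(t, f(t)) : t ∈ [0,1]} is a nonempty compact subset of ℝ × ℝⁿ satisfying Γ = ⋃_{i=1}^m Wᵢ(Γ); moreover each Wᵢ is a contraction of ℝ × ℝⁿ (with the sup-product metric, with Lipschitz constant the maximum of the constants of Tᵢ and Sᵢ), so Γ is the unique nonempty compact set invariant under the system {W₁,…,W_m}. -/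
open scoped ENNReal NNReal
open Set Metric

/-!
The graph is the continuous image of `[0,1]`, and the semiconjugacy `f ∘ Tᵢ = Sᵢ ∘ f` says that
`Wᵢ` maps the graph onto the part of the graph lying over `Tᵢ([0,1])`; since these pieces cover
`[0,1]`, the graph is invariant. For uniqueness, the Hausdorff distance between two nonempty
compact invariant sets is multiplied by at most `maxᵢ Lip(Wᵢ) < 1` under the Hutchinson operator,
so it is zero.
-/

protected theorem LipschitzWith.prodMap {α β γ δ : Type*} [PseudoEMetricSpace α]
    [PseudoEMetricSpace β] [PseudoEMetricSpace γ] [PseudoEMetricSpace δ] {Kf Kg : ℝ≥0}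
    {f : α → β} {g : γ → δ} (hf : LipschitzWith Kf f) (hg : LipschitzWith Kg g) :
    LipschitzWith (max Kf Kg) (Prod.map f g) := by
  have h := (hf.comp LipschitzWith.prod_fst).prodMk (hg.comp LipschitzWith.prod_snd)
  rwa [mul_one, mul_one] at h

theorem LipschitzWith.hausdorffEDist_image_le {α β : Type*} [PseudoEMetricSpace α]
    [PseudoEMetricSpace β] {K : ℝ≥0} {f : α → β} (hf : LipschitzWith K f) {s t : Set α}
    (hs : IsCompact s) (hs₀ : s.Nonempty) (ht : IsCompact t) (ht₀ : t.Nonempty) :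
    hausdorffEDist (f '' s) (f '' t) ≤ K * hausdorffEDist s t := by
  have key : ∀ {s t : Set α}, IsCompact t → t.Nonempty → ∀ x ∈ s,
      ∃ y ∈ f '' t, edist (f x) y ≤ K * hausdorffEDist s t := by
    intro s t ht ht₀ x hx
    obtain ⟨y, hy, hxy⟩ := ht.exists_infEDist_eq_edist ht₀ x
    refine ⟨f y, mem_image_of_mem f hy, (hf x y).trans ?_⟩
    gcongr
    exact hxy ▸ infEDist_le_hausdorffEDist_of_mem hx
  refine hausdorffEDist_le_of_mem_edist ?_ ?_ <;> rintro _ ⟨x, hx, rfl⟩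
  · exact key ht ht₀ x hx
  · simpa only [hausdorffEDist_comm] using key hs hs₀ x hx

theorem eq_of_eq_iUnion_image_of_lipschitzWith {α ι : Type*} [MetricSpace α]
    {W : ι → α → α} {r : ℝ≥0} (hr : r < 1) (hW : ∀ i, LipschitzWith r (W i)) {K L : Set α}
    (hK : IsCompact K) (hK₀ : K.Nonempty) (hKW : K = ⋃ i, W i '' K)
    (hL : IsCompact L) (hL₀ : L.Nonempty) (hLW : L = ⋃ i, W i '' L) : K = L := by
  set D := hausdorffEDist K L
  have hD : D ≠ ⊤ :=
    hausdorffEDist_ne_top_of_nonempty_of_bounded hK₀ hL₀ hK.isBounded hL.isBounded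
  have hcontract : D ≤ r * D :=
    calc D = hausdorffEDist (⋃ i, W i '' K) (⋃ i, W i '' L) := by rw [← hKW, ← hLW]
      _ ≤ ⨆ i, hausdorffEDist (W i '' K) (W i '' L) := hausdorffEDist_iUnion_le
      _ ≤ r * D := iSup_le fun i => (hW i).hausdorffEDist_image_le hK hK₀ hL hL₀
  have hD0 : D = 0 := by
    by_contra h0
    have hlt : (r : ℝ≥0∞) * D < 1 * D :=
      (ENNReal.mul_lt_mul_iff_left h0 hD).2 (ENNReal.coe_lt_one_iff.2 hr)
    exact (one_mul D ▸ hlt).not_ge hcontract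
  exact (hK.isClosed.hausdorffEDist_zero_iff hL.isClosed).1 hD0

theorem range_graph_eq_iUnion_image {X Y ι : Type*} {T : ι → X → X} {S : ι → Y → Y} {f : X → Y}
    (hcover : ⋃ i, range (T i) = univ) (hconj : ∀ i t, f (T i t) = S i (f t)) :
    range (fun t => (t, f t)) = ⋃ i, Prod.map (T i) (S i) '' range (fun t => (t, f t)) := by
  have himage : ∀ i, Prod.map (T i) (S i) '' range (fun t => (t, f t)) =
      (fun t => (t, f t)) '' range (T i) := by
    intro i
    rw [← range_comp, ← range_comp]
    exact congrArg range (funext fun t => by simp [hconj])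
  simp only [himage, ← image_iUnion, hcover, image_univ]

/-- **Proposition 1 (attractor part).**
Let `T₁,…,T_m : [0,1] → [0,1]` be contraction maps whose images cover `[0,1]`,
let `S₁,…,S_m : ℝⁿ → ℝⁿ` be contraction maps, and let `f : [0,1] → ℝⁿ` be continuous
with `f (Tᵢ t) = Sᵢ (f t)` for all `i`, `t`.  With `Wᵢ (t, x) = (Tᵢ t, Sᵢ x)` on the
product `[0,1] × ℝⁿ` (with the sup-product metric), the graph `Γ = {(t, f t)}` is a
nonempty compact set with `Γ = ⋃ᵢ Wᵢ '' Γ`; each `Wᵢ` is Lipschitz with constant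
`max (KTᵢ) (KSᵢ) < 1`, and `Γ` is the unique nonempty compact invariant set. -/
theorem stmt0 (n m : ℕ)
    (T : Fin m → Set.Icc (0:ℝ) 1 → Set.Icc (0:ℝ) 1)
    (KT : Fin m → NNReal) (hKT : ∀ i, KT i < 1)
    (hTlip : ∀ i, LipschitzWith (KT i) (T i))
    (hcover : (Set.univ : Set (Set.Icc (0:ℝ) 1)) = ⋃ i, Set.range (T i))
    (S : Fin m → EuclideanSpace ℝ (Fin n) → EuclideanSpace ℝ (Fin n))
    (KS : Fin m → NNReal) (hKS : ∀ i, KS i < 1)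
    (hSlip : ∀ i, LipschitzWith (KS i) (S i))
    (f : Set.Icc (0:ℝ) 1 → EuclideanSpace ℝ (Fin n))
    (hf : Continuous f)
    (hconj : ∀ i t, f (T i t) = S i (f t))
    (W : Fin m → Set.Icc (0:ℝ) 1 × EuclideanSpace ℝ (Fin n) →
          Set.Icc (0:ℝ) 1 × EuclideanSpace ℝ (Fin n))
    (hW : ∀ i p, W i p = (T i p.1, S i p.2))
    (Γ : Set (Set.Icc (0:ℝ) 1 × EuclideanSpace ℝ (Fin n)))
    (hΓ : Γ = Set.range (fun t => (t, f t))) :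
    Γ.Nonempty ∧ IsCompact Γ ∧ Γ = ⋃ i, W i '' Γ ∧
    (∀ i, LipschitzWith (max (KT i) (KS i)) (W i) ∧ max (KT i) (KS i) < 1) ∧
    (∀ K : Set (Set.Icc (0:ℝ) 1 × EuclideanSpace ℝ (Fin n)),
        K.Nonempty → IsCompact K → K = ⋃ i, W i '' K → K = Γ) := by
  have hWprod : ∀ i, W i = Prod.map (T i) (S i) := fun i => funext (hW i)
  have hWlip : ∀ i, LipschitzWith (max (KT i) (KS i)) (W i) := fun i =>
    hWprod i ▸ (hTlip i).prodMap (hSlip i)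
  have hΓinv : Γ = ⋃ i, W i '' Γ := by
    simpa only [hΓ, hWprod] using range_graph_eq_iUnion_image hcover.symm hconj
  have hΓ₀ : Γ.Nonempty := hΓ ▸ range_nonempty _
  have hΓc : IsCompact Γ := hΓ ▸ isCompact_range (continuous_id.prodMk hf)
  refine ⟨hΓ₀, hΓc, hΓinv, fun i => ⟨hWlip i, max_lt (hKT i) (hKS i)⟩, ?_⟩
  intro K hK₀ hK hKinv
  set r : ℝ≥0 := Finset.univ.sup fun i => max (KT i) (KS i)
  have hr : r < 1 :=
    (Finset.sup_lt_iff zero_lt_one).2 fun i _ => max_lt (hKT i) (hKS i)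
  have hWr : ∀ i, LipschitzWith r (W i) := fun i =>
    (hWlip i).weaken (Finset.le_sup (f := fun i => max (KT i) (KS i)) (Finset.mem_univ i))
  exact eq_of_eq_iUnion_image_of_lipschitzWith hr hWr hK hK₀ hKinv hΓc hΓ₀ hΓinv
end

section
/- Let A : ℝⁿ → ℝⁿ be a continuous linear map, z ∈ ℝⁿ, q > 0, and t' ∈ [0,1] with t' + q ≤ 1. Let f : [0,1] → ℝⁿ be continuous and satisfy f(t) = z + A(f((t − t')/q)) for all t ∈ [t', t' + q]. Define g : [0,1] → ℝⁿ by g(t) = ∫₀ᵗ f(τ) dτ. Then for all t ∈ [t', t' + q], g(t) − g(t') = (t − t')·z + q·A(g((t − t')/q)). -/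
/-- **Equation (3), case ε = 0.**
Let `A : ℝⁿ → ℝⁿ` be a continuous linear map, `z ∈ ℝⁿ`, `q > 0`, `t' ∈ [0,1]` with
`t' + q ≤ 1`.  If `f : [0,1] → ℝⁿ` is continuous and `f t = z + A (f ((t - t')/q))`
for all `t ∈ [t', t'+q]`, and `g t = ∫₀ᵗ f`, then for all `t ∈ [t', t'+q]`,
`g t - g t' = (t - t') • z + q • A (g ((t - t')/q))`. -/
theorem stmt3 (n : ℕ)
    (A : EuclideanSpace ℝ (Fin n) →L[ℝ] EuclideanSpace ℝ (Fin n))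
    (z : EuclideanSpace ℝ (Fin n)) (q t' : ℝ)
    (hq : 0 < q) (ht' : t' ∈ Set.Icc (0:ℝ) 1) (hle : t' + q ≤ 1)
    (f : ℝ → EuclideanSpace ℝ (Fin n)) (hf : ContinuousOn f (Set.Icc 0 1))
    (hfe : ∀ t ∈ Set.Icc t' (t' + q), f t = z + A (f ((t - t') / q)))
    (g : ℝ → EuclideanSpace ℝ (Fin n))
    (hg : ∀ t, g t = ∫ τ in (0:ℝ)..t, f τ) :
    ∀ t ∈ Set.Icc t' (t' + q),
      g t - g t' = (t - t') • z + q • A (g ((t - t') / q)) := by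
  intro t ht
  obtain ⟨ht1, ht2⟩ := ht
  obtain ⟨ht'0, ht'1⟩ := ht'
  have ht01 : t ≤ 1 := le_trans ht2 hle
  have hII : ∀ a b : ℝ, a ∈ Set.Icc (0:ℝ) 1 → b ∈ Set.Icc (0:ℝ) 1 →
      IntervalIntegrable f MeasureTheory.volume a b := by
    intro a b ha hb
    exact (hf.mono (by
      intro x hx
      rcases Set.mem_uIcc.mp hx with h | h
      · exact ⟨le_trans ha.1 h.1, le_trans h.2 hb.2⟩
      · exact ⟨le_trans hb.1 h.1, le_trans h.2 ha.2⟩)).intervalIntegrable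
  -- Step 1 : g t - g t' = ∫ t'..t f
  have h1 : g t - g t' = ∫ τ in t'..t, f τ := by
    rw [hg, hg]
    rw [intervalIntegral.integral_interval_sub_left
      (hII 0 t ⟨le_refl _, zero_le_one⟩ ⟨le_trans ht'0 ht1, ht01⟩)
      (hII 0 t' ⟨le_refl _, zero_le_one⟩ ⟨ht'0, ht'1⟩)]
  -- Step 2 : rewrite the integrand
  have h2 : (∫ τ in t'..t, f τ) = ∫ τ in t'..t, (z + A (f ((τ - t') / q))) := by
    apply intervalIntegral.integral_congr
    intro τ hτ
    rw [Set.uIcc_of_le ht1] at hτ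
    exact hfe τ ⟨hτ.1, le_trans hτ.2 ht2⟩
  -- integrability of the composed map
  have hcomp : IntervalIntegrable (fun τ => A (f ((τ - t') / q))) MeasureTheory.volume t' t := by
    apply ContinuousOn.intervalIntegrable
    apply A.continuous.comp_continuousOn
    apply hf.comp (by fun_prop : Continuous fun τ : ℝ => (τ - t') / q).continuousOn
    intro x hx
    rw [Set.uIcc_of_le ht1] at hx
    constructor
    · exact div_nonneg (by linarith [hx.1]) hq.le
    · rw [div_le_one hq]; linarith [hx.2]
  -- Step 3 : split the integral
  have h3 : (∫ τ in t'..t, (z + A (f ((τ - t') / q))))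
      = (t - t') • z + ∫ τ in t'..t, A (f ((τ - t') / q)) := by
    rw [intervalIntegral.integral_add intervalIntegrable_const hcomp,
      intervalIntegral.integral_const]
  -- Step 4 : change of variables
  have h4 : (∫ τ in t'..t, A (f ((τ - t') / q)))
      = q • ∫ u in (0:ℝ)..(t - t') / q, A (f u) := by
    have := intervalIntegral.integral_comp_sub_right (a := t') (b := t)
      (fun x => A (f (x / q))) t'
    simp only [sub_self] at this
    rw [this, intervalIntegral.integral_comp_div (a := 0) (b := t - t')
      (fun u => A (f u)) hq.ne', zero_div]
  -- Step 5 : pull A out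
  have h5 : (∫ u in (0:ℝ)..(t - t') / q, A (f u)) = A (g ((t - t') / q)) := by
    rw [hg]
    refine A.intervalIntegral_comp_comm (hII 0 ((t - t') / q) ⟨le_refl _, zero_le_one⟩ ?_)
    constructor
    · exact div_nonneg (by linarith) hq.le
    · rw [div_le_one hq]; linarith
  rw [h1, h2, h3, h4, h5]
end

section
/- Let A : ℝⁿ → ℝⁿ be a continuous linear map, z, b ∈ ℝⁿ, q > 0, and t'' ∈ [0,1] with t'' − q ≥ 0. Let f : [0,1] → ℝⁿ be continuous and satisfy f(t) = z + A(b − f((t'' − t)/q)) for all t ∈ [t'' − q, t'']. Define g : [0,1] → ℝⁿ by g(t) = ∫₀ᵗ f(τ) dτ. Then for all t ∈ [t'' − q, t''], g(t) − g(t'' − q) = (t − t'' + q)·(z + A b) + q·A(g((t'' − t)/q) − g(1)). -/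
/-- **Equation (3), case ε = 1 (orientation-reversing).**
Let `A : ℝⁿ → ℝⁿ` be a continuous linear map, `z, b ∈ ℝⁿ`, `q > 0`, `t'' ∈ [0,1]` with
`t'' - q ≥ 0`.  If `f : [0,1] → ℝⁿ` is continuous and `f t = z + A (b - f ((t'' - t)/q))`
for all `t ∈ [t''-q, t'']`, and `g t = ∫₀ᵗ f`, then for all `t ∈ [t''-q, t'']`,
`g t - g (t''-q) = (t - t'' + q) • (z + A b) + q • A (g ((t'' - t)/q) - g 1)`. -/
theorem stmt4 (n : ℕ)
    (A : EuclideanSpace ℝ (Fin n) →L[ℝ] EuclideanSpace ℝ (Fin n))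
    (z b : EuclideanSpace ℝ (Fin n)) (q t'' : ℝ)
    (hq : 0 < q) (ht'' : t'' ∈ Set.Icc (0:ℝ) 1) (hge : 0 ≤ t'' - q)
    (f : ℝ → EuclideanSpace ℝ (Fin n)) (hf : ContinuousOn f (Set.Icc 0 1))
    (hfe : ∀ t ∈ Set.Icc (t'' - q) t'', f t = z + A (b - f ((t'' - t) / q)))
    (g : ℝ → EuclideanSpace ℝ (Fin n))
    (hg : ∀ t, g t = ∫ τ in (0:ℝ)..t, f τ) :
    ∀ t ∈ Set.Icc (t'' - q) t'',
      g t - g (t'' - q) = (t - t'' + q) • (z + A b) + q • A (g ((t'' - t) / q) - g 1) := by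
  intro t ht
  obtain ⟨ht1, ht2⟩ := ht
  obtain ⟨ht''0, ht''1⟩ := ht''
  have hq' : q ≠ 0 := ne_of_gt hq
  have ht0 : (0:ℝ) ≤ t := le_trans hge ht1
  have ht1' : t ≤ 1 := le_trans ht2 ht''1
  have hsub : Set.uIcc (t''-q) t ⊆ Set.Icc (0:ℝ) 1 := by
    rw [Set.uIcc_of_le ht1]
    exact Set.Icc_subset_Icc hge ht1'
  have hmaps : ∀ x ∈ Set.uIcc (t''-q) t, (t'' - x)/q ∈ Set.Icc (0:ℝ) 1 := by
    intro x hx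
    rw [Set.uIcc_of_le ht1] at hx
    constructor
    · exact div_nonneg (by linarith [hx.2]) hq.le
    · rw [div_le_one hq]; linarith [hx.1]
  have hcont_inner : ContinuousOn (fun τ => f ((t'' - τ)/q)) (Set.uIcc (t''-q) t) :=
    hf.comp (by fun_prop) hmaps
  have hfi_inner : IntervalIntegrable (fun τ => f ((t'' - τ)/q))
      MeasureTheory.volume (t''-q) t := hcont_inner.intervalIntegrable
  have hfi_Ainner : IntervalIntegrable (fun τ => A (f ((t'' - τ)/q)))
      MeasureTheory.volume (t''-q) t :=
    (A.continuous.comp_continuousOn hcont_inner).intervalIntegrable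
  have hint : ∀ a c : ℝ, 0 ≤ a → c ≤ 1 → a ≤ c →
      IntervalIntegrable f MeasureTheory.volume a c := by
    intro a c ha hc hac
    exact (hf.mono (by rw [Set.uIcc_of_le hac]; exact Set.Icc_subset_Icc ha hc)).intervalIntegrable
  have h1 : g t - g (t''-q) = ∫ τ in (t''-q)..t, f τ := by
    rw [hg, hg, intervalIntegral.integral_interval_sub_left
      (hint 0 t le_rfl ht1' ht0) (hint 0 (t''-q) le_rfl (by linarith) hge)]
  have hs0 : (0:ℝ) ≤ (t''-t)/q := div_nonneg (by linarith) hq.le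
  have hs1 : (t''-t)/q ≤ 1 := by rw [div_le_one hq]; linarith
  have h4 : ∫ x in (t''-t)/q..1, f x = g 1 - g ((t''-t)/q) := by
    rw [hg, hg, intervalIntegral.integral_interval_sub_left
      (hint 0 1 le_rfl le_rfl zero_le_one) (hint 0 ((t''-t)/q) le_rfl hs1 hs0)]
  have h3 : (∫ τ in (t''-q)..t, f ((t'' - τ)/q)) = q • (g 1 - g ((t''-t)/q)) := by
    have := intervalIntegral.integral_comp_sub_left (a := t''-q) (b := t)
      (fun x => f (x / q)) t''
    rw [this, intervalIntegral.integral_comp_div (c := q) (f := f) hq',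
      show t'' - (t''-q) = q by ring, div_self hq', h4]
  have h2 : (∫ τ in (t''-q)..t, f τ)
      = ∫ τ in (t''-q)..t, ((z + A b) - A (f ((t'' - τ)/q))) := by
    apply intervalIntegral.integral_congr
    intro x hx
    rw [hfe x (by rw [Set.uIcc_of_le ht1] at hx; exact ⟨hx.1, le_trans hx.2 ht2⟩),
      map_sub]
    abel
  rw [h1, h2, intervalIntegral.integral_sub intervalIntegrable_const hfi_Ainner,
    intervalIntegral.integral_const,
    A.intervalIntegral_comp_comm hfi_inner, h3, map_smul, map_sub]
  have : t - (t''-q) = t - t'' + q := by ring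
  rw [this, map_sub, smul_sub]
  module
end

section
/- Let S = {S₁,…,S_m} be a self-similar zipper in ℝⁿ with vertices z₀ = 0, z₁,…,z_m and signature ε, where each Sᵢ has the form Sᵢ(z) = z_{i−1+εᵢ} + (−1)^{εᵢ} Aᵢ(z) with Aᵢ : ℝⁿ → ℝⁿ linear with ‖Aᵢ‖ < 1. Let T = {T₁,…,T_m} be the affine line zipper with vertices 0 = t₀ < ⋯ < t_m = 1 and signature ε given by Tᵢ(s) = t_{i−1+εᵢ} + (−1)^{εᵢ} qᵢ s, where qᵢ = tᵢ − t_{i−1}. Let f : [0,1] → ℝⁿ be continuous with f(Tᵢ(s)) = Sᵢ(f(s)) for all i, s, and set g(t) = ∫₀ᵗ f(τ)dτ. Then for every i and every s ∈ [0,1]: g(Tᵢ(s)) = g(t_{i−1+εᵢ}) + (−1)^{εᵢ} qᵢ s · z_{i−1+εᵢ} + qᵢ · Aᵢ(g(s)). -/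
/-!
Write `T i u = c + a u` with `c = t (i + ε i)` and `a = (-1)^(ε i) q i`. Then
`g (T i s) = g c + ∫_c^{c + a s} f`, and the substitution `x = c + a u` turns the last
integral into `a • ∫_0^s f (T i u) du`. The functional equation replaces `f (T i u)` by
`z (i + ε i) + (-1)^(ε i) • A i (f u)`, and the two signs `(-1)^(ε i)` cancel.
All integrals are over subintervals of `[0,1]`, where `f` is continuous, because `T i` maps
`[0,1]` into `[t i, t (i+1)]`.
-/

open Set intervalIntegral

lemma mem_Icc_of_le_succ {α : Type*} [Preorder α] {t : ℕ → α} {m : ℕ}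
    (ht : ∀ i < m, t i ≤ t (i + 1)) {j : ℕ} (hj : j ≤ m) : t j ∈ Icc (t 0) (t m) := by
  have hmono : Monotone fun k => t (min k m) := monotone_nat_of_le_succ fun k => by
    rcases lt_or_ge k m with hk | hk
    · simpa [min_eq_left hk.le, min_eq_left (Nat.succ_le_of_lt hk)] using ht k hk
    · simp [min_eq_right hk, min_eq_right (hk.trans k.le_succ)]
  simpa [hj] using And.intro (hmono (Nat.zero_le j)) (hmono hj)

lemma add_neg_one_pow_mul_mem_Icc {t : ℕ → ℝ} {i e : ℕ} (hle : t i ≤ t (i + 1))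
    (he : e ≤ 1) {u : ℝ} (hu : u ∈ Icc (0 : ℝ) 1) :
    t (i + e) + (-1) ^ e * (t (i + 1) - t i) * u ∈ Icc (t i) (t (i + 1)) := by
  obtain ⟨hu0, hu1⟩ := hu
  interval_cases e <;> constructor <;> simp only [pow_zero, pow_one, add_zero, one_mul, neg_one_mul] <;>
    nlinarith

theorem integral_zero_add_mul_of_comp_eq {E : Type*} [NormedAddCommGroup E] [NormedSpace ℝ E]
    [CompleteSpace E] {f : ℝ → E} (hf : ContinuousOn f (Icc 0 1)) {c a : ℝ}
    (hmaps : MapsTo (fun u => c + a * u) (Icc 0 1) (Icc 0 1)) {w : E} {L : E →L[ℝ] E}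
    (hconj : ∀ u ∈ Icc (0 : ℝ) 1, f (c + a * u) = w + L (f u)) {s : ℝ}
    (hs : s ∈ Icc (0 : ℝ) 1) :
    ∫ x in 0..c + a * s, f x =
      (∫ x in 0..c, f x) + (a * s) • w + a • L (∫ x in 0..s, f x) := by
  have hint : ∀ x ∈ Icc (0 : ℝ) 1, ∀ y ∈ Icc (0 : ℝ) 1,
      IntervalIntegrable f MeasureTheory.volume x y :=
    fun x hx y hy => (hf.mono (uIcc_subset_Icc hx hy)).intervalIntegrable
  have h0 : (0 : ℝ) ∈ Icc (0 : ℝ) 1 := left_mem_Icc.2 zero_le_one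
  have hc : c ∈ Icc (0 : ℝ) 1 := by simpa using hmaps h0
  have hsub : ∫ u in 0..s, f (c + a * u) = s • w + L (∫ u in 0..s, f u) := by
    have hLf : IntervalIntegrable (fun u => L (f u)) MeasureTheory.volume 0 s :=
      ((L.continuous.comp_continuousOn hf).mono (Icc_subset_Icc_right hs.2)).intervalIntegrable_of_Icc
        hs.1
    rw [integral_congr fun u hu => hconj u (uIcc_subset_Icc h0 hs hu),
      integral_add intervalIntegrable_const hLf, integral_const, sub_zero,
      L.intervalIntegral_comp_comm (hint 0 h0 s hs)]
  calc ∫ x in 0..c + a * s, f x = (∫ x in 0..c, f x) + ∫ x in c..c + a * s, f x :=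
        (integral_add_adjacent_intervals (hint 0 h0 c hc) (hint c hc _ (hmaps hs))).symm
    _ = (∫ x in 0..c, f x) + a • ∫ u in 0..s, f (c + a * u) := by
        rw [smul_integral_comp_add_mul, mul_zero, add_zero]
    _ = _ := by rw [hsub, smul_add, smul_smul, add_assoc]

-- Maps are indexed by `i = 0,…,m-1`, corresponding to the paper's `i+1`.
theorem stmt7_general (n m : ℕ)
    (z : ℕ → EuclideanSpace ℝ (Fin n))
    (ε : ℕ → ℕ) (hε : ∀ i, ε i ≤ 1)
    (A : ℕ → EuclideanSpace ℝ (Fin n) →L[ℝ] EuclideanSpace ℝ (Fin n))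
    (S : ℕ → EuclideanSpace ℝ (Fin n) → EuclideanSpace ℝ (Fin n))
    (hS : ∀ i < m, ∀ x, S i x = z (i + ε i) + ((-1 : ℝ) ^ (ε i)) • A i x)
    (t : ℕ → ℝ) (ht0 : t 0 = 0) (htm : t m = 1)
    (htmono : ∀ i < m, t i < t (i + 1))
    (q : ℕ → ℝ) (hq : ∀ i < m, q i = t (i + 1) - t i)
    (T : ℕ → ℝ → ℝ)
    (hT : ∀ i < m, ∀ s, T i s = t (i + ε i) + (-1 : ℝ) ^ (ε i) * q i * s)
    (f : ℝ → EuclideanSpace ℝ (Fin n)) (hf : ContinuousOn f (Set.Icc 0 1))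
    (hconj : ∀ i < m, ∀ s ∈ Set.Icc (0:ℝ) 1, f (T i s) = S i (f s))
    (g : ℝ → EuclideanSpace ℝ (Fin n))
    (hg : ∀ x, g x = ∫ τ in (0:ℝ)..x, f τ) :
    ∀ i < m, ∀ s ∈ Set.Icc (0:ℝ) 1,
      g (T i s) = g (t (i + ε i)) + ((-1 : ℝ) ^ (ε i) * q i * s) • z (i + ε i)
        + q i • A i (g s) := by
  intro i hi s hs
  have ht : ∀ j ≤ m, t j ∈ Icc (0 : ℝ) 1 := fun j hj =>
    ht0 ▸ htm ▸ mem_Icc_of_le_succ (fun k hk => (htmono k hk).le) hj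
  have hmaps : MapsTo (fun u => t (i + ε i) + (-1) ^ ε i * q i * u) (Icc 0 1) (Icc 0 1) :=
    fun u hu => Icc_subset_Icc (ht i hi.le).1 (ht (i + 1) hi).2 <| by
      simpa only [hq i hi] using add_neg_one_pow_mul_mem_Icc (htmono i hi).le (hε i) hu
  have hconj_affine : ∀ u ∈ Icc (0 : ℝ) 1, f (t (i + ε i) + (-1) ^ ε i * q i * u) =
      z (i + ε i) + ((-1 : ℝ) ^ ε i • A i) (f u) := fun u hu => by
    rw [← hT i hi, hconj i hi u hu, hS i hi, smul_apply]
  have hsign : ∀ v : EuclideanSpace ℝ (Fin n),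
      ((-1 : ℝ) ^ ε i * q i) • (-1 : ℝ) ^ ε i • v = q i • v := by
    intro v
    rw [smul_smul, mul_right_comm, ← mul_pow, neg_one_mul, neg_neg, one_pow, one_mul]
  rw [hT i hi, hg, hg, hg, integral_zero_add_mul_of_comp_eq hf hmaps hconj_affine hs,
    smul_apply, hsign]

/-- **Key computation in Proposition 2.**
Setting: self-similar zipper `Sᵢ z = z_{i-1+εᵢ} + (-1)^{εᵢ} Aᵢ z` in `ℝⁿ` with `z₀ = 0`
and `‖Aᵢ‖ < 1`, affine line zipper `Tᵢ s = t_{i-1+εᵢ} + (-1)^{εᵢ} qᵢ s` with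
`0 = t₀ < ⋯ < t_m = 1`, `qᵢ = tᵢ - t_{i-1}`, linear parametrization `f` (continuous,
`f ∘ Tᵢ = Sᵢ ∘ f` on `[0,1]`), `g t = ∫₀ᵗ f`.  Then for every `i` and `s ∈ [0,1]`:
`g (Tᵢ s) = g t_{i-1+εᵢ} + ((-1)^{εᵢ} qᵢ s) • z_{i-1+εᵢ} + qᵢ • Aᵢ (g s)`.
(Maps are indexed by `i = 0,…,m-1`, corresponding to the paper's `i+1`.) -/
theorem stmt7 (n m : ℕ) (hm : 1 ≤ m)
    (z : ℕ → EuclideanSpace ℝ (Fin n)) (hz0 : z 0 = 0)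
    (ε : ℕ → ℕ) (hε : ∀ i, ε i ≤ 1)
    (A : ℕ → EuclideanSpace ℝ (Fin n) →L[ℝ] EuclideanSpace ℝ (Fin n))
    (hA : ∀ i < m, ‖A i‖ < 1)
    (S : ℕ → EuclideanSpace ℝ (Fin n) → EuclideanSpace ℝ (Fin n))
    (hS : ∀ i < m, ∀ x, S i x = z (i + ε i) + ((-1 : ℝ) ^ (ε i)) • A i x)
    (hSm : ∀ i < m, S i (z m) = z (i + 1 - ε i))
    (t : ℕ → ℝ) (ht0 : t 0 = 0) (htm : t m = 1)
    (htmono : ∀ i < m, t i < t (i + 1))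
    (q : ℕ → ℝ) (hq : ∀ i < m, q i = t (i + 1) - t i)
    (T : ℕ → ℝ → ℝ)
    (hT : ∀ i < m, ∀ s, T i s = t (i + ε i) + (-1 : ℝ) ^ (ε i) * q i * s)
    (f : ℝ → EuclideanSpace ℝ (Fin n)) (hf : ContinuousOn f (Set.Icc 0 1))
    (hconj : ∀ i < m, ∀ s ∈ Set.Icc (0:ℝ) 1, f (T i s) = S i (f s))
    (g : ℝ → EuclideanSpace ℝ (Fin n))
    (hg : ∀ x, g x = ∫ τ in (0:ℝ)..x, f τ) :
    ∀ i < m, ∀ s ∈ Set.Icc (0:ℝ) 1,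
      g (T i s) = g (t (i + ε i)) + ((-1 : ℝ) ^ (ε i) * q i * s) • z (i + ε i)
        + q i • A i (g s) :=
  stmt7_general n m z ε hε A S hS t ht0 htm htmono q hq T hT f hf hconj g hg
end

section
/- Under the setting of Proposition 2 (self-similar zipper Sᵢ(z) = z_{i−1+εᵢ} + (−1)^{εᵢ} Aᵢ(z) in ℝⁿ with z₀ = 0, affine line zipper Tᵢ(s) = t_{i−1+εᵢ} + (−1)^{εᵢ} qᵢ s with qᵢ = tᵢ − t_{i−1}, linear parametrization f, and g(t) = ∫₀ᵗ f(τ)dτ, h = g(1)): define the affine maps Wᵢ : ℝ × ℝⁿ → ℝ × ℝⁿ by Wᵢ(s, y) = (t_{i−1+εᵢ} + (−1)^{εᵢ} qᵢ s, g(t_{i−1+εᵢ}) + (−1)^{εᵢ} qᵢ s · z_{i−1+εᵢ} + qᵢ Aᵢ(y)). Then the graph Γ̃ = {(t, g(t)) : t ∈ [0,1]} satisfies Γ̃ = ⋃_{i=1}^m Wᵢ(Γ̃), and the maps Wᵢ satisfy the zipper vertex conditions Wᵢ(0, g(0)) = (t_{i−1+εᵢ}, g(t_{i−1+εᵢ}))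 and Wᵢ(1, h) = (t_{i−εᵢ}, g(t_{i−εᵢ})) with vertices (tⱼ, g(tⱼ)) and signature ε. -/
/-!
Integrating the conjugacy `f ∘ Tᵢ = zᵢ₊ₑ ± Aᵢ ∘ f` by the substitution `τ = Tᵢ u` gives
`g (Tᵢ s) = g (tᵢ₊ₑ) + (±qᵢ s) zᵢ₊ₑ + qᵢ Aᵢ (g s)`, that is `Wᵢ (s, g s) = (Tᵢ s, g (Tᵢ s))`.
Since `Tᵢ` maps `[0, 1]` onto `[tᵢ, tᵢ₊₁]` and these pieces cover `[0, 1]`, the graph is the union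
of its images, and the vertex conditions are the cases `s = 0` and `s = 1`.
-/

open Set MeasureTheory AffineMap

theorem add_neg_one_pow_mul_sub_mul_eq_lineMap {R : Type*} [CommRing R] (t : ℕ → R) (i : ℕ)
    {k : ℕ} (hk : k ≤ 1) (s : R) :
    t (i + k) + (-1) ^ k * (t (i + 1) - t i) * s = lineMap (t (i + k)) (t (i + 1 - k)) s := by
  rw [lineMap_apply_ring']
  interval_cases k <;> simp <;> ring

theorem image_lineMap_Icc_eq_Icc_of_le_one (t : ℕ → ℝ) (i : ℕ) {k : ℕ} (hk : k ≤ 1)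
    (ht : t i ≤ t (i + 1)) :
    lineMap (t (i + k)) (t (i + 1 - k)) '' Icc (0 : ℝ) 1 = Icc (t i) (t (i + 1)) := by
  rw [← segment_eq_image_lineMap, segment_eq_uIcc, ← uIcc_of_le ht]
  interval_cases k <;> simp [uIcc_comm]

theorem le_of_forall_lt_le_succ {α : Type*} [Preorder α] {t : ℕ → α} {m : ℕ}
    (ht : ∀ i < m, t i ≤ t (i + 1)) {j k : ℕ} (hjk : j ≤ k) (hkm : k ≤ m) : t j ≤ t k := by
  induction k, hjk using Nat.le_induction with
  | base => rfl
  | succ k _ ih => exact (ih (by omega)).trans (ht k (by omega))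

theorem biUnion_range_Icc_eq_Icc {α : Type*} [LinearOrder α] {t : ℕ → α} {m : ℕ} (hm : 1 ≤ m)
    (ht : ∀ i < m, t i ≤ t (i + 1)) :
    ⋃ i ∈ Finset.range m, Icc (t i) (t (i + 1)) = Icc (t 0) (t m) := by
  induction m, hm using Nat.le_induction with
  | base => simp
  | succ m hm ih =>
    rw [Finset.range_add_one, Finset.set_biUnion_insert, ih fun i hi => ht i (by omega),
      union_comm, Icc_union_Icc_eq_Icc (le_of_forall_lt_le_succ ht m.zero_le (by omega))
        (ht m (by omega))]

theorem image_graph_of_eqOn {α β : Type*} {W : α × β → α × β} {φ : α → α} {g : α → β} {I : Set α}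
    (hW : ∀ s ∈ I, W (s, g s) = (φ s, g (φ s))) :
    W '' ((fun x => (x, g x)) '' I) = (fun x => (x, g x)) '' (φ '' I) := by
  rw [image_image, image_image]
  exact image_congr hW

section SelfAffine

variable {E : Type*} [NormedAddCommGroup E] [NormedSpace ℝ E] [CompleteSpace E]
  {f : ℝ → E} (L : E →L[ℝ] E) {c a σ s : ℝ} {v : E}

theorem integral_comp_add_mul_of_eqOn (hf : IntervalIntegrable f volume 0 s)
    (hfL : ∀ u ∈ uIcc 0 s, f (c + a * u) = v + σ • L (f u)) :
    ∫ τ in c..c + a * s, f τ = (a * s) • v + (a * σ) • L (∫ τ in 0..s, f τ) := by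
  have hLf : IntervalIntegrable (fun u => σ • L (f u)) volume 0 s :=
    IntervalIntegrable.smul ⟨L.integrable_comp hf.1, L.integrable_comp hf.2⟩ σ
  calc ∫ τ in c..c + a * s, f τ = a • ∫ u in 0..s, f (c + a * u) := by
        rw [intervalIntegral.smul_integral_comp_add_mul, mul_zero, add_zero]
    _ = a • ∫ u in 0..s, (v + σ • L (f u)) := by rw [intervalIntegral.integral_congr hfL]
    _ = (a * s) • v + (a * σ) • L (∫ τ in 0..s, f τ) := by
      rw [intervalIntegral.integral_add intervalIntegrable_const hLf,
        intervalIntegral.integral_const, intervalIntegral.integral_smul,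
        L.intervalIntegral_comp_comm hf, smul_add, smul_smul, smul_smul, sub_zero]

theorem integral_zero_comp_add_mul_of_eqOn (hf : ContinuousOn f (Icc 0 1))
    (hc : c ∈ Icc (0 : ℝ) 1) (hs : s ∈ Icc (0 : ℝ) 1) (hcs : c + a * s ∈ Icc (0 : ℝ) 1)
    (hfL : ∀ u ∈ Icc (0 : ℝ) 1, f (c + a * u) = v + σ • L (f u)) :
    ∫ τ in 0..c + a * s, f τ =
      (∫ τ in 0..c, f τ) + (a * s) • v + (a * σ) • L (∫ τ in 0..s, f τ) := by
  have hint : ∀ x ∈ Icc (0 : ℝ) 1, ∀ y ∈ Icc (0 : ℝ) 1, IntervalIntegrable f volume x y :=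
    fun x hx y hy => (hf.mono (uIcc_subset_Icc hx hy)).intervalIntegrable
  have h0 : (0 : ℝ) ∈ Icc (0 : ℝ) 1 := left_mem_Icc.2 zero_le_one
  rw [← intervalIntegral.integral_add_adjacent_intervals (hint 0 h0 c hc) (hint c hc _ hcs),
    integral_comp_add_mul_of_eqOn L (hint 0 h0 s hs)
      fun u hu => hfL u (uIcc_subset_Icc h0 hs hu), add_assoc]

end SelfAffine

-- The paper's map `W_{i+1}` is `W i` here, for `i < m`.
theorem stmt8_general (n m : ℕ) (hm : 1 ≤ m)
    (z : ℕ → EuclideanSpace ℝ (Fin n))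
    (ε : ℕ → ℕ) (hε : ∀ i, ε i ≤ 1)
    (A : ℕ → EuclideanSpace ℝ (Fin n) →L[ℝ] EuclideanSpace ℝ (Fin n))
    (S : ℕ → EuclideanSpace ℝ (Fin n) → EuclideanSpace ℝ (Fin n))
    (hS : ∀ i < m, ∀ x, S i x = z (i + ε i) + ((-1 : ℝ) ^ (ε i)) • A i x)
    (t : ℕ → ℝ) (ht0 : t 0 = 0) (htm : t m = 1)
    (htmono : ∀ i < m, t i < t (i + 1))
    (q : ℕ → ℝ) (hq : ∀ i < m, q i = t (i + 1) - t i)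
    (T : ℕ → ℝ → ℝ)
    (hT : ∀ i < m, ∀ s, T i s = t (i + ε i) + (-1 : ℝ) ^ (ε i) * q i * s)
    (f : ℝ → EuclideanSpace ℝ (Fin n)) (hf : ContinuousOn f (Set.Icc 0 1))
    (hconj : ∀ i < m, ∀ s ∈ Set.Icc (0:ℝ) 1, f (T i s) = S i (f s))
    (g : ℝ → EuclideanSpace ℝ (Fin n))
    (hg : ∀ x, g x = ∫ τ in (0:ℝ)..x, f τ)
    (h : EuclideanSpace ℝ (Fin n)) (hh : h = g 1)
    (W : ℕ → ℝ × EuclideanSpace ℝ (Fin n) → ℝ × EuclideanSpace ℝ (Fin n))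
    (hWdef : ∀ i < m, ∀ (s : ℝ) (y : EuclideanSpace ℝ (Fin n)),
      W i (s, y) = (t (i + ε i) + (-1 : ℝ) ^ (ε i) * q i * s,
        g (t (i + ε i)) + ((-1 : ℝ) ^ (ε i) * q i * s) • z (i + ε i) + q i • A i y))
    (Γ : Set (ℝ × EuclideanSpace ℝ (Fin n)))
    (hΓ : Γ = (fun x => (x, g x)) '' Set.Icc 0 1) :
    Γ = ⋃ i ∈ Finset.range m, W i '' Γ ∧
    ∀ i < m, W i (0, g 0) = (t (i + ε i), g (t (i + ε i))) ∧
      W i (1, h) = (t (i + 1 - ε i), g (t (i + 1 - ε i))) := by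
  have hT_lineMap : ∀ i < m, T i = lineMap (t (i + ε i)) (t (i + 1 - ε i)) := fun i hi =>
    funext fun s => by rw [hT i hi, hq i hi, add_neg_one_pow_mul_sub_mul_eq_lineMap t i (hε i)]
  have hT_image : ∀ i < m, T i '' Icc 0 1 = Icc (t i) (t (i + 1)) := fun i hi => by
    rw [hT_lineMap i hi, image_lineMap_Icc_eq_Icc_of_le_one t i (hε i) (htmono i hi).le]
  have hcover : ⋃ i ∈ Finset.range m, Icc (t i) (t (i + 1)) = Icc 0 1 := by
    rw [← ht0, ← htm]
    exact biUnion_range_Icc_eq_Icc hm fun i hi => (htmono i hi).le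
  have hT_mem : ∀ i < m, ∀ s ∈ Icc (0 : ℝ) 1, T i s ∈ Icc (0 : ℝ) 1 := fun i hi s hs =>
    hcover ▸ mem_biUnion (Finset.mem_coe.2 (Finset.mem_range.2 hi))
      (hT_image i hi ▸ mem_image_of_mem (T i) hs)
  have hW_graph : ∀ i < m, ∀ s ∈ Icc (0 : ℝ) 1, W i (s, g s) = (T i s, g (T i s)) := by
    intro i hi s hs
    have hsign : (-1 : ℝ) ^ ε i * q i * (-1) ^ ε i = q i := by
      rw [mul_right_comm, ← mul_pow]
      norm_num
    have hc := hT_mem i hi 0 (left_mem_Icc.2 zero_le_one)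
    rw [hT i hi, mul_zero, add_zero] at hc
    have hcs := hT_mem i hi s hs
    rw [hT i hi] at hcs ⊢
    rw [hWdef i hi, hg, hg, hg, integral_zero_comp_add_mul_of_eqOn (A i) hf hc hs hcs
      fun u hu => by rw [← hS i hi, ← hconj i hi u hu, hT i hi], hsign]
  refine ⟨?_, fun i hi => ?_⟩
  · rw [hΓ]
    conv_lhs => rw [← hcover, image_iUnion₂]
    refine iUnion₂_congr fun i hi => ?_
    have hi : i < m := Finset.mem_range.1 hi
    rw [image_graph_of_eqOn (hW_graph i hi), hT_image i hi]
  · rw [hh, hW_graph i hi 0 (left_mem_Icc.2 zero_le_one),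
      hW_graph i hi 1 (right_mem_Icc.2 zero_le_one), hT_lineMap i hi, lineMap_apply_zero,
      lineMap_apply_one]
    exact ⟨rfl, rfl⟩

/-- **Proposition 2 (main statement).**
Setting: self-similar zipper `Sᵢ z = z_{i-1+εᵢ} + (-1)^{εᵢ} Aᵢ z` in `ℝⁿ` with `z₀ = 0`
and `‖Aᵢ‖ < 1`, affine line zipper `Tᵢ s = t_{i-1+εᵢ} + (-1)^{εᵢ} qᵢ s` with
`0 = t₀ < ⋯ < t_m = 1`, `qᵢ = tᵢ - t_{i-1}`, linear parametrization `f`,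
`g t = ∫₀ᵗ f`, `h = g 1`.  With the affine maps
`Wᵢ (s, y) = (t_{i-1+εᵢ} + (-1)^{εᵢ} qᵢ s, g t_{i-1+εᵢ} + ((-1)^{εᵢ} qᵢ s) • z_{i-1+εᵢ} + qᵢ • Aᵢ y)`,
the graph `Γ̃ = {(t, g t) : t ∈ [0,1]}` satisfies `Γ̃ = ⋃ᵢ Wᵢ '' Γ̃`, and the `Wᵢ`
satisfy the zipper vertex conditions with vertices `(tⱼ, g tⱼ)` and signature `ε`.
(Maps are indexed by `i = 0,…,m-1`, corresponding to the paper's `i+1`.) -/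
theorem stmt8 (n m : ℕ) (hm : 1 ≤ m)
    (z : ℕ → EuclideanSpace ℝ (Fin n)) (hz0 : z 0 = 0)
    (ε : ℕ → ℕ) (hε : ∀ i, ε i ≤ 1)
    (A : ℕ → EuclideanSpace ℝ (Fin n) →L[ℝ] EuclideanSpace ℝ (Fin n))
    (hA : ∀ i < m, ‖A i‖ < 1)
    (S : ℕ → EuclideanSpace ℝ (Fin n) → EuclideanSpace ℝ (Fin n))
    (hS : ∀ i < m, ∀ x, S i x = z (i + ε i) + ((-1 : ℝ) ^ (ε i)) • A i x)
    (hSm : ∀ i < m, S i (z m) = z (i + 1 - ε i))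
    (t : ℕ → ℝ) (ht0 : t 0 = 0) (htm : t m = 1)
    (htmono : ∀ i < m, t i < t (i + 1))
    (q : ℕ → ℝ) (hq : ∀ i < m, q i = t (i + 1) - t i)
    (T : ℕ → ℝ → ℝ)
    (hT : ∀ i < m, ∀ s, T i s = t (i + ε i) + (-1 : ℝ) ^ (ε i) * q i * s)
    (f : ℝ → EuclideanSpace ℝ (Fin n)) (hf : ContinuousOn f (Set.Icc 0 1))
    (hconj : ∀ i < m, ∀ s ∈ Set.Icc (0:ℝ) 1, f (T i s) = S i (f s))
    (g : ℝ → EuclideanSpace ℝ (Fin n))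
    (hg : ∀ x, g x = ∫ τ in (0:ℝ)..x, f τ)
    (h : EuclideanSpace ℝ (Fin n)) (hh : h = g 1)
    (W : ℕ → ℝ × EuclideanSpace ℝ (Fin n) → ℝ × EuclideanSpace ℝ (Fin n))
    (hWdef : ∀ i < m, ∀ (s : ℝ) (y : EuclideanSpace ℝ (Fin n)),
      W i (s, y) = (t (i + ε i) + (-1 : ℝ) ^ (ε i) * q i * s,
        g (t (i + ε i)) + ((-1 : ℝ) ^ (ε i) * q i * s) • z (i + ε i) + q i • A i y))
    (Γ : Set (ℝ × EuclideanSpace ℝ (Fin n)))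
    (hΓ : Γ = (fun x => (x, g x)) '' Set.Icc 0 1) :
    Γ = ⋃ i ∈ Finset.range m, W i '' Γ ∧
    ∀ i < m, W i (0, g 0) = (t (i + ε i), g (t (i + ε i))) ∧
      W i (1, h) = (t (i + 1 - ε i), g (t (i + 1 - ε i))) :=
  stmt8_general n m hm z ε hε A S hS t ht0 htm htmono q hq T hT f hf hconj g hg h hh W hWdef Γ hΓ
end

section
/- Let 0 < p < 1, let f : [0,1] → ℝ be the unique continuous function with f(x) = p·f(2x) on [0,1/2] and f(x) = (1−p)·f(2x−1) + p on [1/2,1], and let g(x) = ∫₀ˣ f(ξ) dξ. Define the affine maps W₁, W₂ : ℝ² → ℝ² by W₁(x,y) = (x/2, (p/2)·y) and W₂(x,y) = (x/2 + 1/2, ((1−p)/2)·y + (p/2)·x + p²/2). Then the graph Γ = {(x, g(x)) : x ∈ [0,1]} satisfies Γ = W₁(Γ) ∪ W₂(Γ). -/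
/-- `f : [0,1] → ℝ` is continuous and satisfies the self-similarity equations of
Example 1: `f x = p · f (2x)` on `[0, 1/2]` and `f x = (1-p) · f (2x-1) + p` on
`[1/2, 1]`. -/
def SatisfiesEx1 (p : ℝ) (f : ℝ → ℝ) : Prop :=
  ContinuousOn f (Set.Icc 0 1) ∧
  (∀ x ∈ Set.Icc (0:ℝ) (1/2), f x = p * f (2 * x)) ∧
  (∀ x ∈ Set.Icc (1/2:ℝ) 1, f x = (1 - p) * f (2 * x - 1) + p)

/-- **Example 1 (the graph of `g` is self-affine).**
For `0 < p < 1`, `f` the continuous solution of the Example 1 equations,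
`g x = ∫₀ˣ f`, and the affine maps `W₁ (x,y) = (x/2, (p/2) y)`,
`W₂ (x,y) = (x/2 + 1/2, ((1-p)/2) y + (p/2) x + p²/2)`, the graph
`Γ = {(x, g x) : x ∈ [0,1]}` satisfies `Γ = W₁ '' Γ ∪ W₂ '' Γ`. -/
theorem stmt13 (p : ℝ) (hp0 : 0 < p) (hp1 : p < 1)
    (f : ℝ → ℝ) (hf : SatisfiesEx1 p f)
    (g : ℝ → ℝ) (hg : ∀ x, g x = ∫ ξ in (0:ℝ)..x, f ξ)
    (W₁ W₂ : ℝ × ℝ → ℝ × ℝ)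
    (hW₁ : ∀ x y, W₁ (x, y) = (x / 2, (p / 2) * y))
    (hW₂ : ∀ x y, W₂ (x, y) = (x / 2 + 1 / 2, ((1 - p) / 2) * y + (p / 2) * x + p ^ 2 / 2))
    (Γ : Set (ℝ × ℝ)) (hΓ : Γ = (fun x => (x, g x)) '' Set.Icc 0 1) :
    Γ = W₁ '' Γ ∪ W₂ '' Γ := by
  obtain ⟨hcont, he1, he2⟩ := hf
  -- integrability of f on subintervals of [0,1]
  have hfi : ∀ a b : ℝ, a ∈ Set.Icc (0:ℝ) 1 → b ∈ Set.Icc (0:ℝ) 1 →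
      IntervalIntegrable f MeasureTheory.volume a b := by
    intro a b ha hb
    exact (hcont.mono (Set.uIcc_subset_Icc ha hb)).intervalIntegrable
  -- Lemma A : g(x/2) = (p/2) g(x) for x ∈ [0,1]
  have hA : ∀ x ∈ Set.Icc (0:ℝ) 1, g (x / 2) = p / 2 * g x := by
    intro x hx
    rw [hg, hg]
    have hcongr : Set.EqOn f (fun t => p * f (2 * t)) (Set.uIcc 0 (x / 2)) := by
      intro t ht
      rw [Set.uIcc_of_le (by linarith [hx.1] : (0:ℝ) ≤ x / 2)] at ht
      exact he1 t ⟨ht.1, by linarith [ht.2, hx.2]⟩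
    rw [intervalIntegral.integral_congr hcongr, intervalIntegral.integral_const_mul,
      intervalIntegral.integral_comp_mul_left (fun u => f u) (by norm_num : (2:ℝ) ≠ 0)]
    simp [smul_eq_mul]
    ring_nf
  -- Lemma B' : g((x+1)/2) - g(1/2) = ((1-p)/2) g x + (p/2) x for x ∈ [0,1]
  have hB' : ∀ x ∈ Set.Icc (0:ℝ) 1,
      g (x / 2 + 1 / 2) - g (1 / 2) = (1 - p) / 2 * g x + p / 2 * x := by
    intro x hx
    have hmem : x / 2 + 1 / 2 ∈ Set.Icc (0:ℝ) 1 := ⟨by linarith [hx.1], by linarith [hx.2]⟩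
    have hsplit : g (x / 2 + 1 / 2) - g (1 / 2)
        = ∫ t in (1/2:ℝ)..(x / 2 + 1 / 2), f t := by
      rw [hg, hg]
      rw [← intervalIntegral.integral_interval_sub_left
        (hfi 0 (x / 2 + 1 / 2) (by norm_num) hmem) (hfi 0 (1/2) (by norm_num) (by norm_num))]
    rw [hsplit]
    have hcongr : Set.EqOn f (fun t => (1 - p) * f (2 * t - 1) + p)
        (Set.uIcc (1/2:ℝ) (x / 2 + 1 / 2)) := by
      intro t ht
      rw [Set.uIcc_of_le (by linarith [hx.1] : (1/2:ℝ) ≤ x / 2 + 1 / 2)] at ht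
      exact he2 t ⟨ht.1, by linarith [ht.2, hx.2]⟩
    rw [intervalIntegral.integral_congr hcongr]
    have hint : IntervalIntegrable (fun t => f (2 * t - 1)) MeasureTheory.volume
        (1/2 : ℝ) (x / 2 + 1 / 2) := by
      have : ContinuousOn (fun t : ℝ => f (2 * t - 1)) (Set.uIcc (1/2:ℝ) (x / 2 + 1 / 2)) := by
        apply hcont.comp (by fun_prop)
        intro t ht
        rw [Set.uIcc_of_le (by linarith [hx.1] : (1/2:ℝ) ≤ x / 2 + 1 / 2)] at ht
        have h1 := ht.1; have h2 := ht.2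
        simp only [Set.mem_Icc]
        exact ⟨by linarith, by linarith [hx.2]⟩
      exact this.intervalIntegrable
    rw [intervalIntegral.integral_add (hint.const_mul _) intervalIntegrable_const,
      intervalIntegral.integral_const_mul,
      intervalIntegral.integral_comp_mul_sub (fun u => f u) (by norm_num : (2:ℝ) ≠ 0) 1]
    rw [show (2:ℝ) * (1/2) - 1 = 0 by norm_num,
      show (2:ℝ) * (x / 2 + 1 / 2) - 1 = x by ring, hg]
    simp [smul_eq_mul]
    ring
  -- g 1 = p and g (1/2) = p^2/2
  have h12 : g (1/2) = p / 2 * g 1 := by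
    have := hA 1 (by norm_num); norm_num at this ⊢; linarith [this]
  have hg1 : g 1 = p := by
    have h2 := hB' 1 (by norm_num)
    norm_num at h2
    linarith
  -- Lemma B : full second functional equation
  have hB : ∀ x ∈ Set.Icc (0:ℝ) 1,
      g (x / 2 + 1 / 2) = (1 - p) / 2 * g x + p / 2 * x + p ^ 2 / 2 := by
    intro x hx
    have := hB' x hx
    rw [h12, hg1] at this
    nlinarith [this]
  subst hΓ
  apply Set.Subset.antisymm
  · rintro _ ⟨x, hx, rfl⟩
    simp only []
    rcases le_or_gt x (1/2) with hle | hlt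
    · left
      refine ⟨(2 * x, g (2 * x)), ⟨2 * x, ⟨by linarith [hx.1], by linarith⟩, rfl⟩, ?_⟩
      rw [hW₁]
      have := hA (2 * x) ⟨by linarith [hx.1], by linarith⟩
      rw [show 2 * x / 2 = x by ring] at this
      rw [this]
      norm_num
    · right
      refine ⟨(2 * x - 1, g (2 * x - 1)), ⟨2 * x - 1, ⟨by linarith, by linarith [hx.2]⟩, rfl⟩, ?_⟩
      rw [hW₂]
      have := hB (2 * x - 1) ⟨by linarith, by linarith [hx.2]⟩
      rw [show (2 * x - 1) / 2 + 1 / 2 = x by ring] at this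
      rw [this]
      simp only [Prod.mk.injEq, and_true]
      ring
  · rintro ⟨a, b⟩ (⟨_, ⟨x, hx, rfl⟩, hxe⟩ | ⟨_, ⟨x, hx, rfl⟩, hxe⟩)
    · rw [hW₁] at hxe
      refine ⟨x / 2, ⟨by linarith [hx.1], by linarith [hx.2]⟩, ?_⟩
      simp only []
      rw [hA x hx, hxe]
    · rw [hW₂] at hxe
      refine ⟨x / 2 + 1 / 2, ⟨by linarith [hx.1], by linarith [hx.2]⟩, ?_⟩
      simp only []
      rw [hB x hx, ← hxe]
end
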